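/- For every k, SC(k) ⊆ TM(k, 2^k): every graph of SC-depth at most k has a tree-model with 2^k colours and depth k. -/

import Mathlib

/-!
Unfold the SC-construction of a graph of depth `k`. A vertex gets as leaf address the indices of
the parts containing it, from the outermost disjoint union inwards, and as colour the set of
levels at which it lay in the complemented set; there are `2 ^ k` colours. Two distinct vertices
whose addresses first differ at level `t` are non-adjacent in the union at level `t`, and each
complementation at a level `≤ t` containing both of them toggles their adjacency. So they are
adjacent iff their colours share an odd number of levels `≤ t`, a condition on the two colours
and on the tree-distance `2 (k - t)` only.
-/

/-- Length of the longest common prefix of `f` and `g` (as strings of length `d`). -/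
def prefLen {d : ℕ} (f g : Fin d → ℕ) : ℕ :=
  Nat.findGreatest (fun k => ∀ i : Fin d, (i : ℕ) < k → f i = g i) d

/-- A tree-model of `m` colours and depth `d` for the graph `G`:
a rooted tree of uniform root-to-leaf distance `d` whose leaves are exactly `V(G)`
(encoded by the injective map `f` sending each leaf to its root-to-leaf address),
a colouring of the leaves by `m` colours, and a symmetric signature `S` such that
two distinct vertices `u,v` are adjacent iff `(col u, col v, ℓ) ∈ S`, where `2ℓ`
is the tree-distance between `u` and `v` in the tree. -/
structure TreeModel {V : Type} (G : SimpleGraph V) (d m : ℕ) where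
  f : V → Fin d → ℕ
  inj : Function.Injective f
  col : V → Fin m
  S : Fin m → Fin m → ℕ → Prop
  symm : ∀ i j l, S i j l → S j i l
  adj : ∀ u v : V, u ≠ v →
    (G.Adj u v ↔ S (col u) (col v) (d - prefLen (f u) (f v)))

/-- `G ∈ TM(d,m)`. -/
def InTM (d m : ℕ) {V : Type} (G : SimpleGraph V) : Prop :=
  Nonempty (TreeModel G d m)

/-- The graph obtained from `G` by complementing the edges on the set `X`. -/
def scFlip {V : Type} (G : SimpleGraph V) (X : Set V) : SimpleGraph V :=
  SimpleGraph.fromRel (fun x y =>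
    (x ∈ X ∧ y ∈ X ∧ ¬ G.Adj x y) ∨ ((x ∉ X ∨ y ∉ X) ∧ G.Adj x y))

/-- `InSCAux n V G` holds iff `G ∈ SC(n)`: `SC 0 = {K₁}`, and `SC (n+1)` consists of
subset-complementations (on an arbitrary set `X`) of disjoint unions of graphs in `SC n`. -/
def InSCAux : ℕ → (V : Type) → SimpleGraph V → Prop
  | 0, V, _ => Nonempty V ∧ Subsingleton V
  | n+1, V, G =>
    ∃ (p : ℕ) (π : V → Fin p) (H : SimpleGraph V) (X : Set V),
      (∀ x y, H.Adj x y → π x = π y) ∧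
      (∀ i : Fin p, InSCAux n _ (H.induce (π ⁻¹' {i}))) ∧
      G = scFlip H X

/-- `G ∈ SC(n)` (graphs of SC-depth at most `n`). -/
def InSC (n : ℕ) {V : Type} (G : SimpleGraph V) : Prop := InSCAux n V G

lemma prefLen_le {d : ℕ} (f g : Fin d → ℕ) : prefLen f g ≤ d :=
  Nat.findGreatest_le d

lemma le_prefLen_iff {d n : ℕ} {f g : Fin d → ℕ} :
    n ≤ prefLen f g ↔ n ≤ d ∧ ∀ i : Fin d, (i : ℕ) < n → f i = g i := by
  refine ⟨fun hn => ⟨hn.trans (prefLen_le f g), fun i hi => ?_⟩,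
    fun ⟨hnd, hfg⟩ => Nat.le_findGreatest hnd hfg⟩
  have hspec := Nat.findGreatest_spec (P := fun n => ∀ i : Fin d, (i : ℕ) < n → f i = g i)
    (Nat.zero_le d) (fun i hi => absurd hi (Nat.not_lt_zero _))
  exact hspec i (hi.trans_le hn)

lemma prefLen_cons_of_ne {d a b : ℕ} (A B : Fin d → ℕ) (hab : a ≠ b) :
    prefLen (Fin.cons a A : Fin (d + 1) → ℕ) (Fin.cons b B) = 0 := by
  by_contra hpos
  have h := (le_prefLen_iff.mp (Nat.one_le_iff_ne_zero.mpr hpos)).2 0 Nat.one_pos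
  exact hab (by simpa using h)

lemma prefLen_cons_cons {d : ℕ} (a : ℕ) (A B : Fin d → ℕ) :
    prefLen (Fin.cons a A : Fin (d + 1) → ℕ) (Fin.cons a B) = prefLen A B + 1 := by
  refine eq_of_forall_le_iff fun n => ?_
  cases n with
  | zero => simp
  | succ n =>
    rw [le_prefLen_iff, Nat.add_le_add_iff_right, Nat.add_le_add_iff_right, le_prefLen_iff,
      Fin.forall_fin_succ]
    simp

def commonFlips {k : ℕ} (c c' : Fin k → Bool) (t : ℕ) : ℕ :=
  (Finset.univ.filter fun j : Fin k => (j : ℕ) ≤ t ∧ c j = true ∧ c' j = true).card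

lemma commonFlips_comm {k : ℕ} (c c' : Fin k → Bool) (t : ℕ) :
    commonFlips c c' t = commonFlips c' c t := by
  simp only [commonFlips, and_comm (a := c _ = true)]

lemma commonFlips_cons_zero {k : ℕ} (a b : Bool) (c c' : Fin k → Bool) :
    commonFlips (Fin.cons a c : Fin (k + 1) → Bool) (Fin.cons b c') 0 = (a && b).toNat := by
  rw [commonFlips, Finset.card_filter, Fin.sum_univ_succ]
  cases a <;> cases b <;> simp

lemma commonFlips_cons_succ {k : ℕ} (a b : Bool) (c c' : Fin k → Bool) (t : ℕ) :
    commonFlips (Fin.cons a c : Fin (k + 1) → Bool) (Fin.cons b c') (t + 1)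
      = (a && b).toNat + commonFlips c c' t := by
  rw [commonFlips, commonFlips, Finset.card_filter, Finset.card_filter, Fin.sum_univ_succ]
  cases a <;> cases b <;> simp [Fin.cons_succ]

lemma Bool.odd_toNat_add_iff (b : Bool) (n : ℕ) : Odd (b.toNat + n) ↔ Xor (b = true) (Odd n) := by
  cases b <;> simp [add_comm 1, Nat.odd_add_one]

lemma scFlip_adj {V : Type} {G : SimpleGraph V} {X : Set V} {u v : V} :
    (scFlip G X).Adj u v ↔ u ≠ v ∧ Xor (u ∈ X ∧ v ∈ X) (G.Adj u v) := by
  simp only [scFlip, SimpleGraph.fromRel_adj, G.adj_comm v u, xor_def]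
  tauto

lemma fiber_apply_congr {V α ι : Type*} {π : V → ι} (F : ∀ i, π ⁻¹' {i} → α) {v : V}
    {i : ι} (h : π v = i) : F (π v) ⟨v, rfl⟩ = F i ⟨v, h⟩ := by
  subst h; rfl

/-- A tree-model with colours `Fin k → Bool` and signature "`commonFlips` is odd", indexed by
the common prefix length `k - ℓ` instead of `ℓ`. -/
structure ParityModel {V : Type} (G : SimpleGraph V) (k : ℕ) where
  addr : V → Fin k → ℕ
  addr_injective : Function.Injective addr
  col : V → Fin k → Bool
  adj_iff : ∀ u v, u ≠ v →
    (G.Adj u v ↔ Odd (commonFlips (col u) (col v) (prefLen (addr u) (addr v))))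

namespace ParityModel

variable {V : Type} {G : SimpleGraph V} {k : ℕ}

def ofSubsingleton [Subsingleton V] : ParityModel G 0 where
  addr _ := Fin.elim0
  addr_injective u v _ := Subsingleton.elim u v
  col _ := Fin.elim0
  adj_iff u v huv := absurd (Subsingleton.elim u v) huv

section

variable {p : ℕ} {π : V → Fin p} {H : SimpleGraph V}

open Classical in
noncomputable def scFlipOfFibers (hπ : ∀ u v, H.Adj u v → π u = π v)
    (M : ∀ i, ParityModel (H.induce (π ⁻¹' {i})) k) (X : Set V) :
    ParityModel (scFlip H X) (k + 1) where
  addr v := Fin.cons (π v : ℕ) ((M (π v)).addr ⟨v, rfl⟩)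
  addr_injective u v huv := by
    have hp : π u = π v := Fin.val_injective (by simpa using congrFun huv 0)
    have htail := (Fin.cons_injective2 huv).2
    rw [fiber_apply_congr (fun i => (M i).addr) hp] at htail
    exact congrArg Subtype.val ((M (π v)).addr_injective htail)
  col v := Fin.cons (decide (v ∈ X)) ((M (π v)).col ⟨v, rfl⟩)
  adj_iff u v huv := by
    rw [scFlip_adj, and_iff_right huv]
    by_cases hp : π u = π v
    · have hne : (⟨u, hp⟩ : π ⁻¹' {π v}) ≠ ⟨v, rfl⟩ := fun h => huv (congrArg Subtype.val h)
      have hH := (M (π v)).adj_iff _ _ hne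
      rw [fiber_apply_congr (fun i => (M i).addr) hp, fiber_apply_congr (fun i => (M i).col) hp,
        hp, prefLen_cons_cons, commonFlips_cons_succ, Bool.odd_toNat_add_iff, ← hH]
      simp
    · have hH : ¬ H.Adj u v := fun h => hp (hπ u v h)
      rw [prefLen_cons_of_ne _ _ (fun h => hp (Fin.val_injective h)), commonFlips_cons_zero,
        ← add_zero (Bool.toNat _), Bool.odd_toNat_add_iff]
      simp [hH]

end

noncomputable def toTreeModel (M : ParityModel G k) : TreeModel G k (2 ^ k) :=
  let e : (Fin k → Bool) ≃ Fin (2 ^ k) := Fintype.equivFinOfCardEq (by simp)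
  { f := M.addr
    inj := M.addr_injective
    col := fun v => e (M.col v)
    S := fun i j l => Odd (commonFlips (e.symm i) (e.symm j) (k - l))
    symm := fun i j l => by rw [commonFlips_comm]; exact id
    adj := fun u v huv => by
      simpa only [Equiv.symm_apply_apply, Nat.sub_sub_self (prefLen_le _ _)] using M.adj_iff u v huv }

end ParityModel

theorem InSCAux.nonempty_parityModel :
    ∀ (k : ℕ) (V : Type) (G : SimpleGraph V), InSCAux k V G → Nonempty (ParityModel G k)
  | 0, _, _, ⟨_, _⟩ => ⟨.ofSubsingleton⟩
  | k + 1, _, _, ⟨_, _, _, X, hπ, hparts, rfl⟩ =>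
    ⟨.scFlipOfFibers hπ (fun i => (nonempty_parityModel k _ _ (hparts i)).some) X⟩

theorem stmt_10_general (k : ℕ) {V : Type} (G : SimpleGraph V)
    (h : InSC k G) : InTM k (2 ^ k) G :=
  (InSCAux.nonempty_parityModel k V G h).map ParityModel.toTreeModel

/-- `SC(k) ⊆ TM(k, 2^k)`. -/
theorem stmt_10 (k : ℕ) {V : Type} [Fintype V] (G : SimpleGraph V)
    (h : InSC k G) : InTM k (2 ^ k) G :=
  stmt_10_general k G h
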